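/- arXiv:1903.04406 — 8 statements merged into one kernel-verified Lean document; each statement's English description precedes it below -/
import Mathlib

section
/- Let G be a subset of a real topological vector space L. Then the topological closure of the conic hull of G (the set of all finite nonnegative linear combinations of elements of G, closed topologically) equals the smallest set containing G and all nonnegative gambles that is closed under nonnegative linear combinations and topological limits. Moreover, the following are equivalent: (1) there exists g in L not in cl(posi(G ∪ L≥)); (2) cl(posi(G ∪ L≥)) contains no gamble g with sup g < 0; (3) the constant function -1 is not in cl(posi(G ∪ L≥)). Here L is the space of bounded real-valued functions on a set Ω and L≥ its subset of nonnegative functions. -/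
/-!
The closure of a set closed under nonnegative combinations is again closed under them,
because `(f, h) ↦ a • f + b • h` is continuous, and any such set containing `S` and `0`
contains `posi S`; so `cl (posi S)` is the smallest closed such set containing `S`.

For the equivalences, let `K` be closed under nonnegative combinations and contain `L≥`.
If `g ∈ K` has `sup g = s < 0`, then `-1 = g / (-s) + (-1 - g / (-s))` with the last summand
nonnegative, so `-1 ∈ K`; and then every `f = ‖f‖ • (-1) + (f + ‖f‖)` lies in `K`.
-/

open BoundedContinuousFunction

def posi {E : Type*} [AddCommMonoid E] [Module ℝ E] (G : Set E) : Set E :=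
  {f | ∃ (k : ℕ) (l : Fin k → ℝ) (g : Fin k → E),
    (∀ i, 0 ≤ l i) ∧ (∀ i, g i ∈ G) ∧ f = ∑ i, l i • g i}

section Posi

variable {E : Type*} [AddCommMonoid E] [Module ℝ E]

def NonnegCombClosed (C : Set E) : Prop :=
  ∀ f ∈ C, ∀ h ∈ C, ∀ a b : ℝ, 0 ≤ a → 0 ≤ b → a • f + b • h ∈ C

lemma subset_posi (G : Set E) : G ⊆ posi G := fun g hg =>
  ⟨1, fun _ => 1, fun _ => g, fun _ => zero_le_one, fun _ => hg, by simp⟩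

lemma nonnegCombClosed_posi (G : Set E) : NonnegCombClosed (posi G) := by
  rintro _ ⟨k, l, g, hl, hg, rfl⟩ _ ⟨m, l', g', hl', hg', rfl⟩ a b ha hb
  refine ⟨k + m, Fin.addCases (fun i => a * l i) (fun j => b * l' j), Fin.addCases g g',
    Fin.addCases (by simpa using fun i => mul_nonneg ha (hl i))
      (by simpa using fun j => mul_nonneg hb (hl' j)),
    Fin.addCases (by simpa using hg) (by simpa using hg'), ?_⟩
  simp [Fin.sum_univ_add, Finset.smul_sum, mul_smul]

lemma NonnegCombClosed.zero_mem {C : Set E} (hC : NonnegCombClosed C) (hne : C.Nonempty) :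
    (0 : E) ∈ C := by
  obtain ⟨f, hf⟩ := hne
  simpa using hC f hf f hf 0 0 le_rfl le_rfl

lemma NonnegCombClosed.posi_subset {G C : Set E} (hC : NonnegCombClosed C) (hGC : G ⊆ C)
    (h0 : (0 : E) ∈ C) : posi G ⊆ C := by
  rintro _ ⟨k, l, g, hl, hg, rfl⟩
  induction k with
  | zero => simpa using h0
  | succ n ih =>
    rw [Fin.sum_univ_succ]
    simpa using hC _ (hGC (hg 0)) _ (ih _ _ (fun i => hl i.succ) (fun i => hg i.succ))
      (l 0) 1 (hl 0) zero_le_one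

variable [TopologicalSpace E] [ContinuousAdd E] [ContinuousSMul ℝ E]

lemma NonnegCombClosed.closure {C : Set E} (hC : NonnegCombClosed C) :
    NonnegCombClosed (closure C) := fun f hf h hh a b ha hb =>
  map_mem_closure₂ (f := fun x y : E => a • x + b • y) (by fun_prop) hf hh
    fun x hx y hy => hC x hx y hy a b ha hb

theorem closure_posi_eq_sInter {S : Set E} (hS : S.Nonempty) :
    closure (posi S) = ⋂₀ {C | S ⊆ C ∧ NonnegCombClosed C ∧ IsClosed C} := by
  apply subset_antisymm
  · rintro f hf C ⟨hSC, hC, hCcl⟩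
    exact hCcl.closure_subset_iff.mpr (hC.posi_subset hSC (hC.zero_mem (hS.mono hSC))) hf
  · exact Set.sInter_subset_of_mem
      ⟨(subset_posi S).trans subset_closure, (nonnegCombClosed_posi S).closure, isClosed_closure⟩

end Posi

namespace BoundedContinuousFunction

variable {Ω : Type*} [TopologicalSpace Ω] {K : Set (Ω →ᵇ ℝ)}

lemma eq_univ_of_const_neg_one_mem (hK : NonnegCombClosed K)
    (hnonneg : {g : Ω →ᵇ ℝ | ∀ x, 0 ≤ g x} ⊆ K) (h : const Ω (-1) ∈ K) : K = Set.univ := by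
  refine Set.eq_univ_of_forall fun f => ?_
  have hshift : f + const Ω ‖f‖ ∈ K := hnonneg fun x => by
    simpa [neg_le_iff_add_nonneg] using f.neg_norm_le_apply x
  have hf : ‖f‖ • const Ω (-1) + (1 : ℝ) • (f + const Ω ‖f‖) = f := by ext x; simp
  simpa only [hf] using hK _ h _ hshift _ _ (norm_nonneg f) zero_le_one

lemma const_neg_one_mem_of_iSup_neg (hK : NonnegCombClosed K)
    (hnonneg : {g : Ω →ᵇ ℝ | ∀ x, 0 ≤ g x} ⊆ K) {g : Ω →ᵇ ℝ} (hg : g ∈ K)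
    (hsup : ⨆ x, g x < 0) : const Ω (-1) ∈ K := by
  set c := (-⨆ x, g x)⁻¹
  have hc : 0 < c := inv_pos.mpr (neg_pos.mpr hsup)
  have hrest : const Ω (-1) - c • g ∈ K := hnonneg fun x => by
    have hle : c * g x ≤ c * ⨆ x, g x :=
      mul_le_mul_of_nonneg_left (le_ciSup g.isBounded_range.bddAbove x) hc.le
    have hcs : c * ⨆ x, g x = -1 := by
      rw [inv_mul_eq_div, div_neg, div_self hsup.ne]
    simp only [coe_sub, coe_smul, Pi.sub_apply, const_apply, smul_eq_mul]
    linarith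
  simpa using hK _ hg _ hrest c 1 hc.le zero_le_one

theorem tfae_const_neg_one_notMem [Nonempty Ω] (hK : NonnegCombClosed K)
    (hnonneg : {g : Ω →ᵇ ℝ | ∀ x, 0 ≤ g x} ⊆ K) :
    List.TFAE [(∃ g : Ω →ᵇ ℝ, g ∉ K), (¬ ∃ g ∈ K, ⨆ x, g x < 0), const Ω (-1) ∉ K] := by
  tfae_have 1 → 2 := by
    rintro ⟨f, hf⟩ ⟨g, hg, hsup⟩
    rw [eq_univ_of_const_neg_one_mem hK hnonneg
      (const_neg_one_mem_of_iSup_neg hK hnonneg hg hsup)] at hf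
    exact hf trivial
  tfae_have 2 → 3 := fun h hm => h ⟨_, hm, by simp⟩
  tfae_have 3 → 1 := fun h => ⟨_, h⟩
  tfae_finish

end BoundedContinuousFunction

theorem stmt0_general {Ω : Type*} [TopologicalSpace Ω] [Nonempty Ω]
    (G : Set (Ω →ᵇ ℝ)) (Lge : Set (Ω →ᵇ ℝ)) (hLge : Lge = {g : Ω →ᵇ ℝ | ∀ x, 0 ≤ g x}) :
    closure (posi (G ∪ Lge)) =
      ⋂₀ {C : Set (Ω →ᵇ ℝ) | G ⊆ C ∧ Lge ⊆ C ∧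
        (∀ f ∈ C, ∀ h ∈ C, ∀ a b : ℝ, 0 ≤ a → 0 ≤ b → a • f + b • h ∈ C) ∧ IsClosed C} ∧
    List.TFAE
      [(∃ g : Ω →ᵇ ℝ, g ∉ closure (posi (G ∪ Lge))),
       (¬ ∃ g ∈ closure (posi (G ∪ Lge)), (⨆ x, g x) < 0),
       ((const Ω (-1) : Ω →ᵇ ℝ) ∉ closure (posi (G ∪ Lge)))] := by
  have hLge_sub : Lge ⊆ closure (posi (G ∪ Lge)) :=
    Set.subset_union_right.trans ((subset_posi _).trans subset_closure)
  have h0 : (0 : Ω →ᵇ ℝ) ∈ Lge := hLge ▸ fun _ => le_rfl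
  refine ⟨?_, tfae_const_neg_one_notMem (nonnegCombClosed_posi _).closure (hLge ▸ hLge_sub)⟩
  rw [closure_posi_eq_sInter ⟨0, Set.mem_union_right G h0⟩]
  simp only [Set.union_subset_iff, and_assoc]
  rfl

/-- `Ω` with the discrete topology, so that `Ω →ᵇ ℝ` is exactly the
space of bounded real-valued functions on `Ω` with the sup norm. -/
theorem stmt0 {Ω : Type*} [TopologicalSpace Ω] [DiscreteTopology Ω] [Nonempty Ω]
    (G : Set (Ω →ᵇ ℝ)) (Lge : Set (Ω →ᵇ ℝ)) (hLge : Lge = {g : Ω →ᵇ ℝ | ∀ x, 0 ≤ g x}) :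
    closure (posi (G ∪ Lge)) =
      ⋂₀ {C : Set (Ω →ᵇ ℝ) | G ⊆ C ∧ Lge ⊆ C ∧
        (∀ f ∈ C, ∀ h ∈ C, ∀ a b : ℝ, 0 ≤ a → 0 ≤ b → a • f + b • h ∈ C) ∧ IsClosed C} ∧
    List.TFAE
      [(∃ g : Ω →ᵇ ℝ, g ∉ closure (posi (G ∪ Lge))),
       (¬ ∃ g ∈ closure (posi (G ∪ Lge)), (⨆ x, g x) < 0),
       ((const Ω (-1) : Ω →ᵇ ℝ) ∉ closure (posi (G ∪ Lge)))] :=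
  stmt0_general G Lge hLge
end

section
/- The polynomial q(θ₁,θ₂) = θ₁² - θ₁θ₂ + θ₂² is nonnegative on the probability simplex {(θ₁,θ₂) : θ₁ ≥ 0, θ₂ ≥ 0, θ₁ + θ₂ ≤ 1} (indeed nonnegative on all of ℝ²), but it does not belong to the Bernstein cone Σ≥_2, i.e., there exist no nonnegative reals u_α such that q(θ) = Σ_{α ∈ ℕ³, |α| = 2} u_α θ₁^{α₁} θ₂^{α₂} (1-θ₁-θ₂)^{α₃} as an identity of polynomials. -/
open MvPolynomial

/-- The multivariate Bernstein polynomial `B_{γ,d}` in `n` variables. -/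
noncomputable def bern (n d : ℕ) (γ : Fin n → ℕ) : MvPolynomial (Fin n) ℝ :=
  C ((d.factorial / ((∏ i, (γ i).factorial) * (d - ∑ i, γ i).factorial) : ℕ) : ℝ) *
    (∏ i, X i ^ γ i) * (1 - ∑ i, X i) ^ (d - ∑ i, γ i)

/-- Multi-indices `γ ∈ ℕⁿ` with `|γ| ≤ d`, as a finset. -/
def multiIdx (n d : ℕ) : Finset (Fin n → ℕ) :=
  (Fintype.piFinset fun _ : Fin n => Finset.range (d + 1)).filter fun γ => ∑ i, γ i ≤ d

/-- `θ₁^{α₁}⋯θₙ^{αₙ}(1-θ₁-⋯-θₙ)^{α_{n+1}}` for `α ∈ ℕ^{n+1}`. -/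
noncomputable def kvGen (n : ℕ) (α : Fin (n + 1) → ℕ) : MvPolynomial (Fin n) ℝ :=
  (∏ i : Fin n, X i ^ α i.castSucc) * (1 - ∑ i, X i) ^ α (Fin.last n)

/-- Multi-indices `α ∈ ℕ^{n+1}` with `|α| ≤ d`. -/
def kvIdxLe (n d : ℕ) : Finset (Fin (n + 1) → ℕ) :=
  (Fintype.piFinset fun _ : Fin (n + 1) => Finset.range (d + 1)).filter fun α => ∑ i, α i ≤ d

/-- Multi-indices `α ∈ ℕ^{n+1}` with `|α| = d`. -/
def kvIdxEq (n d : ℕ) : Finset (Fin (n + 1) → ℕ) :=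
  (Fintype.piFinset fun _ : Fin (n + 1) => Finset.range (d + 1)).filter fun α => ∑ i, α i = d

/-- The Bernstein cone `Σ≥_d`: nonnegative combinations over `|α| ≤ d`. -/
noncomputable def coneLe (n d : ℕ) : Set (MvPolynomial (Fin n) ℝ) :=
  {g | ∃ u : (Fin (n + 1) → ℕ) → ℝ, (∀ α, 0 ≤ u α) ∧
    g = ∑ α ∈ kvIdxLe n d, C (u α) * kvGen n α}

/-- The cone `Σ̃≥_d`: nonnegative combinations over `|α| = d`. -/
noncomputable def coneEq (n d : ℕ) : Set (MvPolynomial (Fin n) ℝ) :=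
  {g | ∃ u : (Fin (n + 1) → ℕ) → ℝ, (∀ α, 0 ≤ u α) ∧
    g = ∑ α ∈ kvIdxEq n d, C (u α) * kvGen n α}

/-!
On the edge `θ₁ + θ₂ = 1` of the simplex the factor `1 - θ₁ - θ₂` vanishes, so a member of
`Σ̃≥_2` restricts there to `u₂₀₀ θ₁² + u₁₁₀ θ₁θ₂ + u₀₂₀ θ₂²` with `u ≥ 0`. Comparing the values
at the endpoints and the midpoint of that edge gives `g(½,½) ≥ (g(1,0) + g(0,1))/4`, whereas
`q(½,½) = 1/4 < 1/2`.
-/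

lemma eval_kvGen (n : ℕ) (α : Fin (n + 1) → ℕ) (θ : Fin n → ℝ) :
    eval θ (kvGen n α) = (∏ i, θ i ^ α i.castSucc) * (1 - ∑ i, θ i) ^ α (Fin.last n) := by
  simp [kvGen]

lemma kvIdxEq_two_two : kvIdxEq 2 2 =
    {![2, 0, 0], ![0, 2, 0], ![0, 0, 2], ![1, 1, 0], ![1, 0, 1], ![0, 1, 1]} := by
  decide

lemma eval_sum_kvIdxEq_two_two_of_add_eq_one (u : (Fin 3 → ℕ) → ℝ) {θ : Fin 2 → ℝ}
    (hθ : θ 0 + θ 1 = 1) :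
    eval θ (∑ α ∈ kvIdxEq 2 2, C (u α) * kvGen 2 α) =
      u ![2, 0, 0] * θ 0 ^ 2 + u ![0, 2, 0] * θ 1 ^ 2 + u ![1, 1, 0] * (θ 0 * θ 1) := by
  simp [kvIdxEq_two_two, eval_kvGen, Fin.sum_univ_two, hθ, add_assoc]

lemma eval_midpoint_ge_of_mem_coneEq_two_two {g : MvPolynomial (Fin 2) ℝ}
    (hg : g ∈ coneEq 2 2) :
    (eval ![1, 0] g + eval ![0, 1] g) / 4 ≤ eval ![1 / 2, 1 / 2] g := by
  obtain ⟨u, hu, rfl⟩ := hg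
  rw [eval_sum_kvIdxEq_two_two_of_add_eq_one u (by norm_num),
    eval_sum_kvIdxEq_two_two_of_add_eq_one u (by norm_num),
    eval_sum_kvIdxEq_two_two_of_add_eq_one u (by norm_num)]
  simp only [Matrix.cons_val_zero, Matrix.cons_val_one]
  linarith [hu ![1, 1, 0]]

lemma eval_sq_sub_mul_add_sq (θ : Fin 2 → ℝ) :
    eval θ (X 0 ^ 2 - X 0 * X 1 + X 1 ^ 2 : MvPolynomial (Fin 2) ℝ) =
      (θ 0 - θ 1 / 2) ^ 2 + 3 / 4 * θ 1 ^ 2 := by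
  simp only [eval_add, eval_sub, eval_pow, eval_mul, eval_X]
  ring

/-- `q = θ₁² - θ₁θ₂ + θ₂²` is nonnegative on all of ℝ² (hence on
the probability simplex), but does not belong to the Bernstein cone `Σ≥_2`. -/
theorem stmt10 :
    (∀ θ : Fin 2 → ℝ, 0 ≤ eval θ (X 0 ^ 2 - X 0 * X 1 + X 1 ^ 2 : MvPolynomial (Fin 2) ℝ)) ∧
    (∀ θ : Fin 2 → ℝ, (∀ j, 0 ≤ θ j) → θ 0 + θ 1 ≤ 1 →
      0 ≤ eval θ (X 0 ^ 2 - X 0 * X 1 + X 1 ^ 2 : MvPolynomial (Fin 2) ℝ)) ∧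
    (X 0 ^ 2 - X 0 * X 1 + X 1 ^ 2 : MvPolynomial (Fin 2) ℝ) ∉ coneEq 2 2 := by
  have hnonneg (θ : Fin 2 → ℝ) :
      0 ≤ eval θ (X 0 ^ 2 - X 0 * X 1 + X 1 ^ 2 : MvPolynomial (Fin 2) ℝ) := by
    rw [eval_sq_sub_mul_add_sq]
    positivity
  refine ⟨hnonneg, fun θ _ _ => hnonneg θ, fun hq => ?_⟩
  have := eval_midpoint_ge_of_mem_coneEq_two_two hq
  simp only [eval_sq_sub_mul_add_sq] at this
  norm_num at this
end

section
/- For the polynomial q(θ₁,θ₂) = θ₁² - θ₁θ₂ + θ₂², the supremum of λ₀ ∈ ℝ such that q - λ₀ belongs to the Bernstein cone Σ≥_2 equals -1/2. In particular, q + 1/2 ∈ Σ≥_2 with decomposition q(θ) + 1/2 = (1/2)(1-θ₁-θ₂)² + θ₂(1-θ₁-θ₂) + (3/2)θ₂² + θ₁(1-θ₁-θ₂) + (3/2)θ₁², and for any λ₀ > -1/2, q - λ₀ ∉ Σ≥_2. -/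
/-! In a representation `q - λ₀ = ∑ u_α θ₁^{α₁} θ₂^{α₂} (1-θ₁-θ₂)^{α₃}`, evaluation at the
vertices `(1,0)` and `(0,1)` forces `u₂₀₀ = u₀₂₀ = 1 - λ₀`, and evaluation at the edge midpoint
`(1/2,1/2)` gives `1/4 - λ₀ = (u₂₀₀ + u₀₂₀ + u₁₁₀)/4 ≥ (1 - λ₀)/2`, that is `λ₀ ≤ -1/2`.
The bound is attained by the explicit decomposition of `q + 1/2`. -/

open MvPolynomial

lemma kvGen_two (a b c : ℕ) :
    kvGen 2 ![a, b, c] = X 0 ^ a * X 1 ^ b * (1 - X 0 - X 1) ^ c := by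
  simp [kvGen, Fin.prod_univ_two, Fin.sum_univ_two, Fin.last, sub_sub]

lemma sum_kvIdxEq_two_two {M : Type*} [AddCommMonoid M] (f : (Fin 3 → ℕ) → M) :
    ∑ α ∈ kvIdxEq 2 2, f α = f ![2, 0, 0] + f ![0, 2, 0] + f ![0, 0, 2] + f ![1, 1, 0] +
      f ![1, 0, 1] + f ![0, 1, 1] := by
  rw [kvIdxEq_two_two, Finset.sum_insert (by decide), Finset.sum_insert (by decide),
    Finset.sum_insert (by decide), Finset.sum_insert (by decide),
    Finset.sum_insert (by decide), Finset.sum_singleton]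
  abel

lemma mem_coneEq_two_two_iff {g : MvPolynomial (Fin 2) ℝ} :
    g ∈ coneEq 2 2 ↔ ∃ a b c d e f : ℝ, 0 ≤ a ∧ 0 ≤ b ∧ 0 ≤ c ∧ 0 ≤ d ∧ 0 ≤ e ∧ 0 ≤ f ∧
      g = C a * X 0 ^ 2 + C b * X 1 ^ 2 + C c * (1 - X 0 - X 1) ^ 2 + C d * (X 0 * X 1) +
        C e * (X 0 * (1 - X 0 - X 1)) + C f * (X 1 * (1 - X 0 - X 1)) := by
  simp only [coneEq, Set.mem_ofPred_eq, sum_kvIdxEq_two_two, kvGen_two]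
  constructor
  · rintro ⟨u, hu, rfl⟩
    exact ⟨u ![2, 0, 0], u ![0, 2, 0], u ![0, 0, 2], u ![1, 1, 0], u ![1, 0, 1], u ![0, 1, 1],
      hu _, hu _, hu _, hu _, hu _, hu _, by ring⟩
  · rintro ⟨a, b, c, d, e, f, ha, hb, hc, hd, he, hf, rfl⟩
    refine ⟨fun α => if α = ![2, 0, 0] then a else if α = ![0, 2, 0] then b else
      if α = ![0, 0, 2] then c else if α = ![1, 1, 0] then d else
      if α = ![1, 0, 1] then e else if α = ![0, 1, 1] then f else 0, fun α => ?_, ?_⟩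
    · dsimp only; split_ifs <;> first | assumption | rfl
    · simp +decide

lemma sq_sub_mul_add_sq_add_half_eq :
    (X 0 ^ 2 - X 0 * X 1 + X 1 ^ 2 + C (1/2) : MvPolynomial (Fin 2) ℝ) =
      C (1/2) * (1 - X 0 - X 1) ^ 2 + X 1 * (1 - X 0 - X 1) + C (3/2) * X 1 ^ 2 +
        X 0 * (1 - X 0 - X 1) + C (3/2) * X 0 ^ 2 := by
  refine MvPolynomial.funext fun x => ?_
  simp only [map_add, map_sub, map_mul, map_pow, map_one, eval_C, eval_X]
  ring

lemma le_neg_half_of_mem_coneEq {l : ℝ}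
    (h : (X 0 ^ 2 - X 0 * X 1 + X 1 ^ 2 - C l : MvPolynomial (Fin 2) ℝ) ∈ coneEq 2 2) :
    l ≤ -(1/2) := by
  obtain ⟨a, b, c, d, e, f, -, -, -, hd, -, -, hg⟩ := mem_coneEq_two_two_iff.1 h
  have heval (x : Fin 2 → ℝ) : x 0 ^ 2 - x 0 * x 1 + x 1 ^ 2 - l =
      a * x 0 ^ 2 + b * x 1 ^ 2 + c * (1 - x 0 - x 1) ^ 2 + d * (x 0 * x 1) +
        e * (x 0 * (1 - x 0 - x 1)) + f * (x 1 * (1 - x 0 - x 1)) := by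
    simpa using congrArg (eval x) hg
  have h₁ := heval ![1, 0]
  have h₂ := heval ![0, 1]
  have h₃ := heval ![1/2, 1/2]
  norm_num at h₁ h₂ h₃
  linarith

/-- the supremum of `λ₀` with `q - λ₀ ∈ Σ≥_2` is `-1/2` (it is
attained, i.e. it is the greatest element), with the explicit decomposition of
`q + 1/2`, and `q - λ₀ ∉ Σ≥_2` for every `λ₀ > -1/2`. -/
theorem stmt11 :
    IsGreatest {l : ℝ |
        (X 0 ^ 2 - X 0 * X 1 + X 1 ^ 2 - C l : MvPolynomial (Fin 2) ℝ) ∈ coneEq 2 2}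
      (-(1/2)) ∧
    (X 0 ^ 2 - X 0 * X 1 + X 1 ^ 2 + C (1/2) : MvPolynomial (Fin 2) ℝ) =
      C (1/2) * (1 - X 0 - X 1) ^ 2 + X 1 * (1 - X 0 - X 1) + C (3/2) * X 1 ^ 2 +
        X 0 * (1 - X 0 - X 1) + C (3/2) * X 0 ^ 2 ∧
    (∀ l : ℝ, -(1/2) < l →
      (X 0 ^ 2 - X 0 * X 1 + X 1 ^ 2 - C l : MvPolynomial (Fin 2) ℝ) ∉ coneEq 2 2) := by
  have hmem : (X 0 ^ 2 - X 0 * X 1 + X 1 ^ 2 - C (-(1/2)) : MvPolynomial (Fin 2) ℝ) ∈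
      coneEq 2 2 := by
    rw [map_neg, sub_neg_eq_add, sq_sub_mul_add_sq_add_half_eq, mem_coneEq_two_two_iff]
    exact ⟨3/2, 3/2, 1/2, 0, 1, 1, by norm_num, by norm_num, by norm_num, le_rfl, zero_le_one,
      zero_le_one, by simp only [map_zero, map_one]; ring⟩
  exact ⟨⟨hmem, fun l => le_neg_half_of_mem_coneEq⟩, sq_sub_mul_add_sq_add_half_eq,
    fun l hl hl_mem => (le_neg_half_of_mem_coneEq hl_mem).not_gt hl⟩
end

section
/- The polynomial q(θ₁,θ₂) = θ₁² - θ₁θ₂ + θ₂² does not belong to the Bernstein cone Σ≥_d for any degree d ≥ 2; that is, for every d, q cannot be written as Σ_{α ∈ ℕ³, |α| = d} u_α θ₁^{α₁} θ₂^{α₂} (1-θ₁-θ₂)^{α₃} with all u_α ≥ 0. -/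
/-!
Substituting `θᵢ = xᵢ / (1 + ∑ⱼ xⱼ)` (in power series, where `1 + ∑ⱼ xⱼ` is a unit) sends
`1 - ∑ⱼ θⱼ` to `1 / (1 + ∑ⱼ xⱼ)`, so it turns every generator `θ^α (1 - ∑ θ)^{α_{n+1}}` with
`|α| = d` into `x^α / (1 + ∑ⱼ xⱼ)^d`. Hence `(1 + ∑ⱼ xⱼ)^d` times the image of a nonnegative
combination `∑ u_α θ^α (1 - ∑ θ)^{α_{n+1}}` is `∑ u_α x^α`, which has nonnegative coefficients.
For `q`, homogeneous of degree two, it is `q(x₁, x₂) (1 + x₁ + x₂)^{d-2}`, whose coefficient of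
`x₁x₂` is `-1`.
-/
open MvPolynomial

namespace MvPowerSeries

variable (σ R : Type*) [Semiring R] [PartialOrder R] [IsOrderedRing R]

def nonnegCoeffs : Subsemiring (MvPowerSeries σ R) where
  carrier := {f | ∀ m, 0 ≤ coeff m f}
  zero_mem' _ := by simp
  one_mem' m := by
    classical
    rw [coeff_one]
    split_ifs <;> simp
  add_mem' hf hg m := by
    rw [map_add]
    exact add_nonneg (hf m) (hg m)
  mul_mem' hf hg m := by
    classical
    rw [coeff_mul]
    exact Finset.sum_nonneg fun p _ => mul_nonneg (hf _) (hg _)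

variable {σ R}

theorem mem_nonnegCoeffs {f : MvPowerSeries σ R} : f ∈ nonnegCoeffs σ R ↔ ∀ m, 0 ≤ coeff m f :=
  Iff.rfl

theorem C_mem_nonnegCoeffs {a : R} (ha : 0 ≤ a) : C a ∈ nonnegCoeffs σ R := by
  classical
  intro m
  rw [coeff_C]
  split_ifs <;> simp [ha]

theorem X_mem_nonnegCoeffs (i : σ) : X i ∈ nonnegCoeffs σ R := by
  classical
  intro m
  rw [coeff_X]
  split_ifs <;> simp

end MvPowerSeries

noncomputable def projDenom (n : ℕ) : MvPowerSeries (Fin n) ℝ :=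
  1 + ∑ i, MvPowerSeries.X i

noncomputable def projSubst (n : ℕ) : MvPolynomial (Fin n) ℝ →ₐ[ℝ] MvPowerSeries (Fin n) ℝ :=
  aeval fun i => MvPowerSeries.X i * (projDenom n)⁻¹

section projSubst

variable {n : ℕ}

theorem constantCoeff_projDenom : MvPowerSeries.constantCoeff (projDenom n) = 1 := by
  simp [projDenom]

theorem projDenom_mul_inv : projDenom n * (projDenom n)⁻¹ = 1 :=
  MvPowerSeries.mul_inv_cancel _ (by simp [constantCoeff_projDenom])

theorem projSubst_one_sub_sum_X : projSubst n (1 - ∑ i, X i) = (projDenom n)⁻¹ := by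
  have h := projDenom_mul_inv (n := n)
  simp only [projSubst, map_sub, map_one, map_sum, aeval_X, ← Finset.sum_mul]
  unfold projDenom at h ⊢
  linear_combination -h

theorem projSubst_kvGen (α : Fin (n + 1) → ℕ) :
    projSubst n (kvGen n α) =
      (∏ i, MvPowerSeries.X i ^ α i.castSucc) * (projDenom n)⁻¹ ^ ∑ i, α i := by
  rw [kvGen, map_mul, map_pow, projSubst_one_sub_sum_X, map_prod, Fin.sum_univ_castSucc, pow_add,
    ← Finset.prod_pow_eq_pow_sum]
  simp only [map_pow, projSubst, aeval_X, mul_pow, Finset.prod_mul_distrib]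
  ring

theorem projDenom_pow_mul_projSubst_kvGen {d : ℕ} {α : Fin (n + 1) → ℕ} (hα : ∑ i, α i = d) :
    projDenom n ^ d * projSubst n (kvGen n α) = ∏ i, MvPowerSeries.X i ^ α i.castSucc := by
  rw [projSubst_kvGen, hα, mul_left_comm, ← mul_pow, projDenom_mul_inv, one_pow, mul_one]

theorem projDenom_pow_mul_projSubst_mem_nonnegCoeffs {d : ℕ} {g : MvPolynomial (Fin n) ℝ}
    (hg : g ∈ coneEq n d) :
    projDenom n ^ d * projSubst n g ∈ MvPowerSeries.nonnegCoeffs (Fin n) ℝ := by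
  obtain ⟨u, hu, rfl⟩ := hg
  simp only [map_sum, Finset.mul_sum, map_mul, algHom_C, mul_left_comm _ (algebraMap ℝ _ _)]
  refine Subsemiring.sum_mem _ fun α hα => ?_
  rw [projDenom_pow_mul_projSubst_kvGen (Finset.mem_filter.mp hα).2]
  exact Subsemiring.mul_mem _ (MvPowerSeries.C_mem_nonnegCoeffs (hu α))
    (Subsemiring.prod_mem _ fun i _ =>
      Subsemiring.pow_mem _ (MvPowerSeries.X_mem_nonnegCoeffs i) _)

end projSubst

theorem projDenom_pow_mul_projSubst_q {d : ℕ} (hd : 2 ≤ d) :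
    projDenom 2 ^ d * projSubst 2 (X 0 ^ 2 - X 0 * X 1 + X 1 ^ 2) =
      (MvPowerSeries.X 0 ^ 2 - MvPowerSeries.X 0 * MvPowerSeries.X 1 + MvPowerSeries.X 1 ^ 2) *
        projDenom 2 ^ (d - 2) := by
  obtain ⟨k, rfl⟩ := Nat.exists_eq_add_of_le hd
  have h := projDenom_mul_inv (n := 2)
  simp only [projSubst, map_add, map_sub, map_mul, map_pow, aeval_X, Nat.add_sub_cancel_left]
  linear_combination
    (MvPowerSeries.X 0 ^ 2 - MvPowerSeries.X 0 * MvPowerSeries.X 1 + MvPowerSeries.X 1 ^ 2) *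
      projDenom 2 ^ k * (projDenom 2 * (projDenom 2)⁻¹ + 1) * h

open MvPowerSeries in
theorem coeff_X0X1_mul (G : MvPowerSeries (Fin 2) ℝ) :
    coeff (Finsupp.single 0 1 + Finsupp.single 1 1)
        ((MvPowerSeries.X 0 ^ 2 - MvPowerSeries.X 0 * MvPowerSeries.X 1 +
          MvPowerSeries.X 1 ^ 2) * G) = -constantCoeff G := by
  rw [X_pow_eq, X_pow_eq, X_def 0, X_def 1, monomial_mul_monomial]
  simp [sub_mul, add_mul, MvPowerSeries.coeff_monomial_mul]

/-- `q = θ₁² - θ₁θ₂ + θ₂²` does not belong to the Bernstein cone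
`Σ≥_d` (combinations over `|α| = d`) for any degree `d ≥ 2`. -/
theorem stmt12 (d : ℕ) (hd : 2 ≤ d) :
    (X 0 ^ 2 - X 0 * X 1 + X 1 ^ 2 : MvPolynomial (Fin 2) ℝ) ∉ coneEq 2 d := by
  intro hq
  have h := MvPowerSeries.mem_nonnegCoeffs.mp
    (projDenom_pow_mul_projSubst_mem_nonnegCoeffs hq) (Finsupp.single 0 1 + Finsupp.single 1 1)
  rw [projDenom_pow_mul_projSubst_q hd, coeff_X0X1_mul, map_pow, constantCoeff_projDenom,
    one_pow] at h
  norm_num at h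
end

section
/- There exists a linear functional L on the space of polynomials of degree at most 2 in three variables θ₁, θ₂, θ₃, defined on monomials by L(1)=1, L(θ₁)=1/3, L(θ₂)=1/6, L(θ₃)=1/6, L(θ₁²)=1/3, L(θ₂²)=0, L(θ₃²)=0, L(θ₁θ₂)=0, L(θ₁θ₃)=0, L(θ₂θ₃)=1/6, such that L(p) ≥ 0 for every polynomial p in the Bernstein cone Σ≥_2 (n = 3, d = 2), i.e., L assigns nonnegative value to every product θ₁^{α₁}θ₂^{α₂}θ₃^{α₃}(1-θ₁-θ₂-θ₃)^{α₄} with α₁+α₂+α₃+α₄ = 2. -/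
open MvPolynomial

/-
`L` is not the moment functional of a measure on the simplex (it gives `θ₂²` the value `0` but
`θ₂` the value `1/6`), so nonnegativity on the cone has to be checked generator by generator.
Writing `s = 1 - θ₁ - θ₂ - θ₃`, the values of `L` on the ten products of two of `θ₁, θ₂, θ₃, s`
are those of `θᵢθⱼ` from the statement, together with `L (θᵢ s) = 0` and `L (s²) = 1/3`.
-/

lemma LinearMap.nonneg_of_mem_coneEq {n d : ℕ} (L : MvPolynomial (Fin n) ℝ →ₗ[ℝ] ℝ)
    (hL : ∀ α ∈ kvIdxEq n d, 0 ≤ L (kvGen n α)) {p : MvPolynomial (Fin n) ℝ}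
    (hp : p ∈ coneEq n d) : 0 ≤ L p := by
  obtain ⟨u, hu, rfl⟩ := hp
  rw [map_sum]
  refine Finset.sum_nonneg fun α hα => ?_
  rw [C_mul', map_smul, smul_eq_mul]
  exact mul_nonneg (hu α) (hL α hα)

noncomputable def coinState : MvPolynomial (Fin 3) ℝ →ₗ[ℝ] ℝ :=
  lcoeff ℝ 0 + (1/3 : ℝ) • lcoeff ℝ (Finsupp.single 0 1) + (1/6 : ℝ) • lcoeff ℝ (Finsupp.single 1 1)
    + (1/6 : ℝ) • lcoeff ℝ (Finsupp.single 2 1) + (1/3 : ℝ) • lcoeff ℝ (Finsupp.single 0 2)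
    + (1/6 : ℝ) • lcoeff ℝ (Finsupp.single 1 1 + Finsupp.single 2 1)

lemma coinState_one : coinState 1 = 1 := by
  simp [coinState, coeff_one, Finsupp.ext_iff, Fin.forall_fin_succ]

lemma coinState_X (i : Fin 3) : coinState (X i) = ![1/3, 1/6, 1/6] i := by
  fin_cases i <;> simp [coinState, coeff_X, Finsupp.ext_iff, Fin.forall_fin_succ]

lemma coinState_X_mul_X (i j : Fin 3) :
    coinState (X i * X j) = !![1/3, 0, 0; 0, 0, 1/6; 0, 1/6, 0] i j := by
  fin_cases i <;> fin_cases j <;>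
    simp [coinState, X, monomial_mul, Finsupp.ext_iff, Fin.forall_fin_succ, Finsupp.single_apply]

lemma kvGen_three (α : Fin 4 → ℕ) :
    kvGen 3 α = X 0 ^ α 0 * X 1 ^ α 1 * X 2 ^ α 2 * (1 - (X 0 + X 1 + X 2)) ^ α 3 := by
  simp [kvGen, Fin.prod_univ_three, Fin.sum_univ_three, mul_assoc]

lemma coinState_kvGen_nonneg {α : Fin 4 → ℕ} (hα : ∑ i, α i = 2) :
    0 ≤ coinState (kvGen 3 α) := by
  rw [Fin.sum_univ_four] at hα
  rw [kvGen_three]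
  generalize α 0 = a, α 1 = b, α 2 = c, α 3 = e at hα ⊢
  obtain rfl : e = 2 - a - b - c := by omega
  have : a ≤ 2 := by omega
  have : b ≤ 2 - a := by omega
  have : c ≤ 2 - a - b := by omega
  interval_cases a <;> interval_cases b <;> interval_cases c <;>
    simp [pow_two, mul_sub, sub_mul, mul_add, add_mul, coinState_X_mul_X, coinState_X,
      coinState_one]
  -- the case `s²`
  norm_num

/-- existence of the coin-state linear functional `L` on
polynomials in `θ₁,θ₂,θ₃`, nonnegative on the Bernstein cone `Σ≥_2` (n = 3). -/
theorem stmt13 :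
    ∃ L : MvPolynomial (Fin 3) ℝ →ₗ[ℝ] ℝ,
      L 1 = 1 ∧ L (X 0) = 1/3 ∧ L (X 1) = 1/6 ∧ L (X 2) = 1/6 ∧
      L (X 0 ^ 2) = 1/3 ∧ L (X 1 ^ 2) = 0 ∧ L (X 2 ^ 2) = 0 ∧
      L (X 0 * X 1) = 0 ∧ L (X 0 * X 2) = 0 ∧ L (X 1 * X 2) = 1/6 ∧
      (∀ p ∈ coneEq 3 2, 0 ≤ L p) := by
  refine ⟨coinState, ?_, ?_, ?_, ?_, ?_, ?_, ?_, ?_, ?_, ?_, fun p hp =>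
    coinState.nonneg_of_mem_coneEq
      (fun α hα => coinState_kvGen_nonneg (Finset.mem_filter.1 hα).2) hp⟩ <;>
  simp [sq, coinState_one, coinState_X, coinState_X_mul_X]
end

section
/- Let L be the linear functional with moments L(1)=1, L(θ₁)=1/3, L(θ₂)=1/6, L(θ₃)=1/6, L(θ₁²)=1/3, L(θ₂²)=0, L(θ₃²)=0, L(θ₁θ₂)=0, L(θ₁θ₃)=0, L(θ₂θ₃)=1/6. For q(θ) = -(θ₁+θ₂)² - (θ₁+θ₃)(1 - 2θ₁ - 2θ₂) - ε with 0 < ε ≤ 1/6, one has L(q) = 1/6 - ε ≥ 0, even though q < 0 everywhere on the probability simplex. Hence L cannot be represented by any finitely additive probability measure on the simplex (no classical probability μ satisfies L(p) = ∫ p dμ for all polynomials p of degree ≤ 2). -/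
/-!
With `s = θ₁ + θ₂` and `t = θ₁ + θ₃ ∈ [0, 1]` on the simplex, `q + ε = -((1 - t) s² + t (s - 1)²)`,
so `q ≤ -ε` there. A normalized functional that is nonnegative on polynomials nonnegative on the
simplex therefore gives `q` a value `≤ -ε`; but `q` has degree two, and the moments of `L` give
it the value `1/6 - ε`.
-/

open MvPolynomial

noncomputable def coinTestPoly (e : ℝ) : MvPolynomial (Fin 3) ℝ :=
  -(X 0 + X 1) ^ 2 - (X 0 + X 2) * (1 - 2 * X 0 - 2 * X 1) - C e

theorem sq_add_mul_one_sub_two_mul_nonneg {R : Type*} [CommRing R] [LinearOrder R]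
    [IsOrderedRing R] (s : R) {t : R} (ht₀ : 0 ≤ t) (ht₁ : t ≤ 1) :
    0 ≤ s ^ 2 + t * (1 - 2 * s) := by
  have key : s ^ 2 + t * (1 - 2 * s) = (1 - t) * s ^ 2 + t * (s - 1) ^ 2 := by ring
  rw [key]
  exact add_nonneg (mul_nonneg (sub_nonneg.2 ht₁) (sq_nonneg s)) (mul_nonneg ht₀ (sq_nonneg _))

theorem eval_coinTestPoly_le {e : ℝ} (θ : Fin 3 → ℝ) (hθ : ∀ i, 0 ≤ θ i)
    (hsum : θ 0 + θ 1 + θ 2 ≤ 1) : eval θ (coinTestPoly e) ≤ -e := by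
  have h := sq_add_mul_one_sub_two_mul_nonneg (θ 0 + θ 1)
    (add_nonneg (hθ 0) (hθ 2)) (by linarith [hθ 1])
  simp only [coinTestPoly, map_sub, map_neg, map_add, map_mul, map_pow, map_one, map_ofNat,
    eval_X, eval_C]
  linarith

theorem coinTestPoly_eq (e : ℝ) :
    coinTestPoly e = X 0 ^ 2 - X 1 ^ 2 + (2 : ℝ) • (X 0 * X 2) + (2 : ℝ) • (X 1 * X 2)
      - X 0 - X 2 - e • 1 := by
  simp only [coinTestPoly, smul_eq_C_mul, map_ofNat, mul_one]
  ring

theorem map_coinTestPoly (J : MvPolynomial (Fin 3) ℝ →ₗ[ℝ] ℝ) (e : ℝ) :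
    J (coinTestPoly e) = J (X 0 ^ 2) - J (X 1 ^ 2) + 2 * J (X 0 * X 2) + 2 * J (X 1 * X 2)
      - J (X 0) - J (X 2) - e * J 1 := by
  simp only [coinTestPoly_eq, map_sub, map_add, map_smul, smul_eq_mul]

theorem totalDegree_coinTestPoly_le (e : ℝ) : (coinTestPoly e).totalDegree ≤ 2 := by
  have hX : ∀ i, (X i : MvPolynomial (Fin 3) ℝ) ∈ restrictTotalDegree (Fin 3) ℝ 2 := fun i => by
    simp [mem_restrictTotalDegree, totalDegree_X]
  have hXX : ∀ i j, (X i * X j : MvPolynomial (Fin 3) ℝ) ∈ restrictTotalDegree (Fin 3) ℝ 2 :=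
    fun i j => (mem_restrictTotalDegree _ _ _).2 <|
      (totalDegree_mul _ _).trans (by simp [totalDegree_X])
  have h1 : (1 : MvPolynomial (Fin 3) ℝ) ∈ restrictTotalDegree (Fin 3) ℝ 2 := by
    simp [mem_restrictTotalDegree]
  rw [← mem_restrictTotalDegree, coinTestPoly_eq, pow_two, pow_two]
  exact sub_mem (sub_mem (sub_mem (add_mem (add_mem (sub_mem (hXX 0 0) (hXX 1 1))
    (Submodule.smul_mem _ _ (hXX 0 2))) (Submodule.smul_mem _ _ (hXX 1 2))) (hX 0)) (hX 2))
    (Submodule.smul_mem _ _ h1)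

theorem MvPolynomial.apply_le_of_forall_eval_le {R σ : Type*} [CommRing R] [PartialOrder R]
    [IsOrderedRing R] {P : (σ → R) → Prop} (I : MvPolynomial σ R →ₗ[R] R) (hI₁ : I 1 = 1)
    (hI : ∀ p, (∀ θ, P θ → 0 ≤ eval θ p) → 0 ≤ I p) {p : MvPolynomial σ R} {c : R}
    (hp : ∀ θ, P θ → eval θ p ≤ c) : I p ≤ c := by
  have hC : I (C c) = c := by
    rw [C_eq_smul_one, map_smul, hI₁, smul_eq_mul, mul_one]
  have h := hI (C c - p) fun θ hθ => by simpa [sub_nonneg] using hp θ hθ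
  rw [map_sub, hC, sub_nonneg] at h
  exact h

theorem stmt15_general (L : MvPolynomial (Fin 3) ℝ →ₗ[ℝ] ℝ)
    (h1 : L 1 = 1) (hx : L (X 0) = 1/3) (hz : L (X 2) = 1/6)
    (hxx : L (X 0 ^ 2) = 1/3) (hyy : L (X 1 ^ 2) = 0)
    (hxz : L (X 0 * X 2) = 0) (hyz : L (X 1 * X 2) = 1/6)
    (e : ℝ) (he0 : 0 < e) (he1 : e ≤ 1/6) :
    L (-(X 0 + X 1) ^ 2 - (X 0 + X 2) * (1 - 2 * X 0 - 2 * X 1) - C e) = 1/6 - e ∧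
    0 ≤ L (-(X 0 + X 1) ^ 2 - (X 0 + X 2) * (1 - 2 * X 0 - 2 * X 1) - C e) ∧
    (∀ θ : Fin 3 → ℝ, (∀ i, 0 ≤ θ i) → θ 0 + θ 1 + θ 2 ≤ 1 →
      eval θ (-(X 0 + X 1) ^ 2 - (X 0 + X 2) * (1 - 2 * X 0 - 2 * X 1) - C e :
        MvPolynomial (Fin 3) ℝ) < 0) ∧
    ¬ ∃ I : MvPolynomial (Fin 3) ℝ →ₗ[ℝ] ℝ, I 1 = 1 ∧
        (∀ p : MvPolynomial (Fin 3) ℝ,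
          (∀ θ : Fin 3 → ℝ, (∀ i, 0 ≤ θ i) → θ 0 + θ 1 + θ 2 ≤ 1 → 0 ≤ eval θ p) →
          0 ≤ I p) ∧
        (∀ p : MvPolynomial (Fin 3) ℝ, p.totalDegree ≤ 2 → I p = L p) := by
  have hLq : L (coinTestPoly e) = 1/6 - e := by
    rw [map_coinTestPoly, h1, hx, hz, hxx, hyy, hxz, hyz]
    ring
  refine ⟨hLq, hLq ▸ by linarith, fun θ hθ hsum =>
    (eval_coinTestPoly_le θ hθ hsum).trans_lt (neg_lt_zero.2 he0), ?_⟩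
  rintro ⟨I, hI₁, hI, hIL⟩
  have hIq : I (coinTestPoly e) ≤ -e :=
    apply_le_of_forall_eval_le (P := fun θ => (∀ i, 0 ≤ θ i) ∧ θ 0 + θ 1 + θ 2 ≤ 1) I hI₁
      (fun p hp => hI p fun θ hθ hsum => hp θ ⟨hθ, hsum⟩)
      (fun θ hθ => eval_coinTestPoly_le θ hθ.1 hθ.2)
  rw [hIL _ (totalDegree_coinTestPoly_le e), hLq] at hIq
  linarith

/-- with the coin-state moments, `L q = 1/6 - ε ≥ 0` for
`q = -(θ₁+θ₂)² - (θ₁+θ₃)(1-2θ₁-2θ₂) - ε` and `0 < ε ≤ 1/6`, even though `q` is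
negative everywhere on the probability simplex.  Consequently `L` is not
representable by any (finitely additive) probability on the simplex: there is no
normalized monotone (i.e. nonnegative on simplex-nonnegative polynomials)
linear functional — such as integration against a finitely additive probability
measure — agreeing with `L` on all polynomials of degree ≤ 2. -/
theorem stmt15 (L : MvPolynomial (Fin 3) ℝ →ₗ[ℝ] ℝ)
    (h1 : L 1 = 1) (hx : L (X 0) = 1/3) (hy : L (X 1) = 1/6) (hz : L (X 2) = 1/6)
    (hxx : L (X 0 ^ 2) = 1/3) (hyy : L (X 1 ^ 2) = 0) (hzz : L (X 2 ^ 2) = 0)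
    (hxy : L (X 0 * X 1) = 0) (hxz : L (X 0 * X 2) = 0) (hyz : L (X 1 * X 2) = 1/6)
    (e : ℝ) (he0 : 0 < e) (he1 : e ≤ 1/6) :
    L (-(X 0 + X 1) ^ 2 - (X 0 + X 2) * (1 - 2 * X 0 - 2 * X 1) - C e) = 1/6 - e ∧
    0 ≤ L (-(X 0 + X 1) ^ 2 - (X 0 + X 2) * (1 - 2 * X 0 - 2 * X 1) - C e) ∧
    (∀ θ : Fin 3 → ℝ, (∀ i, 0 ≤ θ i) → θ 0 + θ 1 + θ 2 ≤ 1 →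
      eval θ (-(X 0 + X 1) ^ 2 - (X 0 + X 2) * (1 - 2 * X 0 - 2 * X 1) - C e :
        MvPolynomial (Fin 3) ℝ) < 0) ∧
    ¬ ∃ I : MvPolynomial (Fin 3) ℝ →ₗ[ℝ] ℝ, I 1 = 1 ∧
        (∀ p : MvPolynomial (Fin 3) ℝ,
          (∀ θ : Fin 3 → ℝ, (∀ i, 0 ≤ θ i) → θ 0 + θ 1 + θ 2 ≤ 1 → 0 ≤ eval θ p) →
          0 ≤ I p) ∧
        (∀ p : MvPolynomial (Fin 3) ℝ, p.totalDegree ≤ 2 → I p = L p) :=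
  stmt15_general L h1 hx hz hxx hyy hxz hyz e he0 he1
end

section
/- The discrete probability measure p = (1/2)δ_{a} + (1/2)δ_{b} on ℝ³, where a = ((3-√3)/6, 0, 0) and b = ((3+√3)/6, 0, 0), satisfies the marginal moment constraints ∫(θ₁+θ₂)dp = 1/2, ∫(θ₁+θ₃)dp = 1/2, ∫(θ₁+θ₂)²dp = 1/3, ∫(θ₁+θ₃)²dp = 1/3, but fails to match the full coin-state moments: ∫θ₂ dp = 0 ≠ 1/6 and ∫θ₂θ₃ dp = 0 ≠ 1/6. -/
open MeasureTheory

theorem integral_half_dirac_add_half_dirac {α E : Type*} [MeasurableSpace α]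
    [MeasurableSingletonClass α] [NormedAddCommGroup E] [NormedSpace ℝ E] [CompleteSpace E]
    (f : α → E) (a b : α) :
    ∫ x, f x ∂((1/2 : ENNReal) • Measure.dirac a + (1/2 : ENNReal) • Measure.dirac b) =
      (2 : ℝ)⁻¹ • (f a + f b) := by
  have hint : ∀ c : α, Integrable f ((1/2 : ENNReal) • Measure.dirac c) := fun c =>
    (integrable_dirac enorm_lt_top).smul_measure (by norm_num)
  rw [integral_add_measure (hint a) (hint b), integral_smul_measure, integral_smul_measure,
    integral_dirac, integral_dirac, ← smul_add]
  norm_num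

/-- `(3 ∓ √3) / 6` are the two-point Gauss–Legendre nodes on `[0, 1]`, so their uniform mixture
has the first two moments `1/2` and `1/3` of the uniform distribution. -/
theorem sqrt_three_nodes_sum : (3 - √3) / 6 + (3 + √3) / 6 = 1 := by ring

theorem sqrt_three_nodes_sq_sum : ((3 - √3) / 6) ^ 2 + ((3 + √3) / 6) ^ 2 = 2 / 3 := by
  nlinarith [Real.sq_sqrt (show (0 : ℝ) ≤ 3 by norm_num)]

/-- the mixture of two Dirac measures at
`a = ((3-√3)/6, 0, 0)` and `b = ((3+√3)/6, 0, 0)` matches the marginal moments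
of the coin state but not its full moments (`∫θ₂ = 0 ≠ 1/6`, `∫θ₂θ₃ = 0 ≠ 1/6`). -/
theorem stmt18 :
    ∀ p : Measure (Fin 3 → ℝ),
      p = (1/2 : ENNReal) • Measure.dirac (![(3 - Real.sqrt 3)/6, 0, 0]) +
          (1/2 : ENNReal) • Measure.dirac (![(3 + Real.sqrt 3)/6, 0, 0]) →
      (∫ θ, (θ 0 + θ 1) ∂p) = 1/2 ∧
      (∫ θ, (θ 0 + θ 2) ∂p) = 1/2 ∧
      (∫ θ, (θ 0 + θ 1) ^ 2 ∂p) = 1/3 ∧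
      (∫ θ, (θ 0 + θ 2) ^ 2 ∂p) = 1/3 ∧
      (∫ θ, θ 1 ∂p) = 0 ∧ (∫ θ, θ 1 ∂p) ≠ 1/6 ∧
      (∫ θ, θ 1 * θ 2 ∂p) = 0 ∧ (∫ θ, θ 1 * θ 2 ∂p) ≠ 1/6 := by
  rintro p rfl
  simp only [integral_half_dirac_add_half_dirac, smul_eq_mul, Matrix.cons_val_zero,
    Matrix.cons_val_one, Matrix.cons_val_two, Matrix.head_cons, Matrix.tail_cons, add_zero,
    mul_zero, sqrt_three_nodes_sum, sqrt_three_nodes_sq_sum]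
  norm_num
end

section
/- For any finite set G of polynomials of degree at most d and the Bernstein cone Σ≥_d, the set C = posi(G ∪ Σ≥_d) is P-coherent (i.e., contains no polynomial in the interior of -Σ≥_d) if and only if the dual set Q = {L : L linear functional with L(1) = 1, L(p) ≥ 0 for all p ∈ Σ≥_d, and L(g) ≥ 0 for all g ∈ G} is nonempty. -/
open MvPolynomial

/-- The (algebraic) interior, i.e. the core, of a set `S` within the
finite-dimensional space of polynomials of total degree at most `d`; for convex
sets in finite dimensions this coincides with the topological interior. -/
def core (n d : ℕ) (S : Set (MvPolynomial (Fin n) ℝ)) : Set (MvPolynomial (Fin n) ℝ) :=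
  {f | f ∈ S ∧ ∀ h : MvPolynomial (Fin n) ℝ, h.totalDegree ≤ d →
    ∃ ε : ℝ, 0 < ε ∧ ∀ t : ℝ, 0 ≤ t → t ≤ ε → f + t • h ∈ S}

/-!
Write `θₙ₊₁ = 1 - θ₁ - ⋯ - θₙ`, so that `θ₁ + ⋯ + θₙ₊₁ = 1`. Every polynomial of degree at most
`d` is a linear combination of the degree-`d` products `θ^α` (multiplying by `θ₁ + ⋯ + θₙ₊₁`
raises degrees), and the multinomial expansion of `1 = (θ₁ + ⋯ + θₙ₊₁)^d` contains every such
product with coefficient at least `1`. Hence `1` is an order unit: each `p` of degree `≤ d`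
satisfies `-M ≤ p ≤ M` in the order of `Σ≥_d`. This puts `-1` in the interior of `-Σ≥_d`, so
coherence forces `-1 ∉ C`, and the Riesz extension theorem then gives a functional `L ≥ 0` on `C`
with `L 1 = 1`. Conversely such an `L` is `≥ 0` on `C` but negative on every `p` in the interior
of `-Σ≥_d`, since `-(p + ε)` still lies in `Σ≥_d`.
-/

section ConicDuality

open PointedCone

variable {E : Type*}

lemma posi_eq_hull [AddCommMonoid E] [Module ℝ E] (S : Set E) :
    posi S = (hull ℝ S : Set E) := by
  ext x
  rw [SetLike.mem_coe, Submodule.mem_span_set']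
  constructor
  · rintro ⟨k, l, g, hl, hg, rfl⟩
    exact ⟨k, fun i => ⟨l i, hl i⟩, fun i => ⟨g i, hg i⟩, rfl⟩
  · rintro ⟨k, l, g, rfl⟩
    exact ⟨k, fun i => l i, fun i => g i, fun i => (l i).2, fun i => (g i).2, rfl⟩

lemma nonneg_of_mem_hull [AddCommMonoid E] [Module ℝ E] {S : Set E} {L : E →ₗ[ℝ] ℝ}
    (hS : ∀ x ∈ S, 0 ≤ L x) {x : E} (hx : x ∈ hull ℝ S) : 0 ≤ L x := by
  induction hx using Submodule.span_induction with
  | mem x h => exact hS x h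
  | zero => simp
  | add x y _ _ hx hy => rw [map_add]; exact add_nonneg hx hy
  | smul r x _ hx => exact (L.map_smul_of_tower r x).symm ▸ smul_nonneg r.2 hx

/- Riesz extension needs every vector to be dominated by the domain `ℝ ∙ e` modulo the cone;
adding a complement `U` of `V` to the cone achieves this, and since `K ⊆ V` it does not enlarge
the cone's trace on `ℝ ∙ e`. -/
theorem exists_linearMap_eq_one_nonneg_of_orderUnit [AddCommGroup E] [Module ℝ E]
    (K : PointedCone ℝ E) (V : Submodule ℝ E) {e : E} (heV : e ∈ V) (hKV : K ≤ V)
    (hunit : ∀ v ∈ V, ∃ M : ℝ, M • e + v ∈ K) (he : -e ∉ K) :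
    ∃ L : E →ₗ[ℝ] ℝ, L e = 1 ∧ ∀ x ∈ K, 0 ≤ L x := by
  obtain ⟨U, hU⟩ := V.exists_isCompl
  have he0 : e ≠ 0 := by rintro rfl; exact he (by simp [K.zero_mem])
  set f : E →ₗ.[ℝ] ℝ := LinearPMap.mkSpanSingleton e 1 he0
  have hf : ∀ (c : ℝ) (h), f ⟨c • e, h⟩ = c := fun c h =>
    (LinearPMap.mkSpanSingleton'_apply e (1 : ℝ) _ c h).trans (mul_one c)
  have nonneg : ∀ x : f.domain, (x : E) ∈ K ⊔ (U : PointedCone ℝ E) → 0 ≤ f x := by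
    rintro ⟨x, hx⟩ hxK
    obtain ⟨c, rfl⟩ := Submodule.mem_span_singleton.1 hx
    obtain ⟨k, hk, u, hu, hku⟩ := Submodule.mem_sup.1 hxK
    have hu0 : u = 0 := by
      refine (Submodule.disjoint_def.1 hU.disjoint) u ?_ hu
      rw [eq_sub_of_add_eq' hku]
      exact V.sub_mem (V.smul_mem c heV) (hKV hk)
    replace hku : k = c • e := by simpa [hu0] using hku
    rw [hf]
    by_contra! hc
    refine he ?_
    have hneg : -e = (-c⁻¹) • (c • e) := by
      rw [smul_smul, neg_mul, inv_mul_cancel₀ hc.ne, neg_one_smul]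
    rw [hneg]
    exact K.smul_mem (by simpa using hc.le) (hku ▸ hk)
  have dense : ∀ y, ∃ x : f.domain, (x : E) + y ∈ K ⊔ (U : PointedCone ℝ E) := by
    intro y
    obtain ⟨v, hv, u, hu, rfl⟩ :=
      Submodule.mem_sup.1 (hU.sup_eq_top ▸ Submodule.mem_top : y ∈ V ⊔ U)
    obtain ⟨M, hM⟩ := hunit v hv
    refine ⟨⟨M • e, Submodule.smul_mem _ _ (Submodule.mem_span_singleton_self e)⟩, ?_⟩
    rw [← add_assoc]
    exact Submodule.add_mem_sup hM hu
  obtain ⟨L, hLf, hLK⟩ := riesz_extension _ f nonneg dense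
  refine ⟨L, ?_, fun x hx => hLK x (Submodule.mem_sup_left hx)⟩
  simpa using
    (hLf ⟨(1 : ℝ) • e, Submodule.smul_mem _ _ (Submodule.mem_span_singleton_self e)⟩).trans
      (hf 1 _)

end ConicDuality

section Bernstein

open PointedCone

variable {n d : ℕ}

lemma mem_kvIdxEq {α : Fin (n + 1) → ℕ} : α ∈ kvIdxEq n d ↔ ∑ i, α i = d := by
  simp only [kvIdxEq, Finset.mem_filter, Fintype.mem_piFinset, Finset.mem_range]
  exact ⟨And.right, fun h => ⟨fun i => h ▸ Nat.lt_succ_of_le (Finset.single_le_sum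
    (fun j _ => Nat.zero_le (α j)) (Finset.mem_univ i)), h⟩⟩

lemma mem_kvIdxLe {α : Fin (n + 1) → ℕ} : α ∈ kvIdxLe n d ↔ ∑ i, α i ≤ d := by
  simp only [kvIdxLe, Finset.mem_filter, Fintype.mem_piFinset, Finset.mem_range]
  exact ⟨And.right, fun h => ⟨fun i => Nat.lt_succ_of_le ((Finset.single_le_sum
    (fun j _ => Nat.zero_le (α j)) (Finset.mem_univ i)).trans h), h⟩⟩

lemma kvIdxEq_eq_piAntidiag : kvIdxEq n d = Finset.univ.piAntidiag d := by
  ext α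
  simp [mem_kvIdxEq]

variable (n) in
noncomputable def baryCoord : Fin (n + 1) → MvPolynomial (Fin n) ℝ :=
  Fin.snoc X (1 - ∑ i, X i)

variable (n) in
lemma sum_baryCoord : ∑ i, baryCoord n i = 1 := by
  simp [baryCoord, Fin.sum_univ_castSucc]

lemma totalDegree_baryCoord_le (i : Fin (n + 1)) : (baryCoord n i).totalDegree ≤ 1 := by
  induction i using Fin.lastCases with
  | last =>
    simp only [baryCoord, Fin.snoc_last]
    refine (totalDegree_sub _ _).trans (max_le (by simp) ?_)
    exact (totalDegree_finsetSum _ _).trans (Finset.sup_le fun i _ => (totalDegree_X i).le)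
  | cast i => simp [baryCoord]

lemma kvGen_eq_prod (α : Fin (n + 1) → ℕ) : kvGen n α = ∏ i, baryCoord n i ^ α i := by
  simp [kvGen, baryCoord, Fin.prod_univ_castSucc]

lemma kvGen_add_single (α : Fin (n + 1) → ℕ) (i : Fin (n + 1)) :
    kvGen n (α + Pi.single i 1) = kvGen n α * baryCoord n i := by
  simp only [kvGen_eq_prod, Pi.add_apply, pow_add, Finset.prod_mul_distrib]
  congr 1
  simp [Pi.single_apply, pow_ite]

lemma kvGen_eq_sum_kvGen_add_single (α : Fin (n + 1) → ℕ) :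
    kvGen n α = ∑ i, kvGen n (α + Pi.single i 1) := by
  simp [kvGen_add_single, ← Finset.mul_sum, sum_baryCoord]

lemma totalDegree_kvGen_le (α : Fin (n + 1) → ℕ) :
    (kvGen n α).totalDegree ≤ ∑ i, α i := by
  rw [kvGen_eq_prod]
  refine (totalDegree_finsetProd _ _).trans (Finset.sum_le_sum fun i _ => ?_)
  exact (totalDegree_pow _ _).trans (mul_le_of_le_one_right (Nat.zero_le _)
    (totalDegree_baryCoord_le i))

variable (n d) in
lemma one_eq_sum_multinomial_smul_kvGen :
    (1 : MvPolynomial (Fin n) ℝ) =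
      ∑ α ∈ kvIdxEq n d, (Nat.multinomial Finset.univ α : ℝ) • kvGen n α := by
  rw [← one_pow d, ← sum_baryCoord n, Finset.sum_pow_eq_sum_piAntidiag, kvIdxEq_eq_piAntidiag]
  simp [kvGen_eq_prod, Nat.cast_smul_eq_nsmul, nsmul_eq_mul]

variable (n) in
noncomputable def kvSpan (d : ℕ) : Submodule ℝ (MvPolynomial (Fin n) ℝ) :=
  Submodule.span ℝ (kvGen n '' kvIdxEq n d)

lemma kvGen_mem_kvSpan {α : Fin (n + 1) → ℕ} (hα : ∑ i, α i = d) :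
    kvGen n α ∈ kvSpan n d :=
  Submodule.subset_span ⟨α, mem_kvIdxEq.2 hα, rfl⟩

lemma kvSpan_mono : Monotone (kvSpan n) := by
  refine monotone_nat_of_le_succ fun e => Submodule.span_le.2 ?_
  rintro _ ⟨α, hα, rfl⟩
  rw [kvGen_eq_sum_kvGen_add_single]
  refine Submodule.sum_mem _ fun i _ => kvGen_mem_kvSpan ?_
  simp [Finset.sum_add_distrib, mem_kvIdxEq.1 hα]

lemma monomial_one_mem_kvSpan (v : Fin n →₀ ℕ) : monomial v 1 ∈ kvSpan n (∑ i, v i) := by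
  have hv : monomial v (1 : ℝ) = kvGen n (Fin.snoc v 0) := by
    simp [kvGen, Fin.snoc_castSucc, Fin.snoc_last, monomial_eq, Finsupp.prod_fintype]
  rw [hv]
  exact kvGen_mem_kvSpan (by simp [Fin.sum_univ_castSucc])

lemma restrictTotalDegree_le_kvSpan : restrictTotalDegree (Fin n) ℝ d ≤ kvSpan n d := by
  rw [restrictTotalDegree, restrictSupport, AddMonoidAlgebra.supported_eq_span_single,
    Submodule.span_le]
  rintro _ ⟨v, hv, rfl⟩
  refine kvSpan_mono ?_ (monomial_one_mem_kvSpan v)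
  simpa [Finsupp.sum_fintype] using hv

variable (n d) in
noncomputable def kvCone : PointedCone ℝ (MvPolynomial (Fin n) ℝ) :=
  hull ℝ (kvGen n '' kvIdxLe n d)

lemma coe_kvCone : (kvCone n d : Set (MvPolynomial (Fin n) ℝ)) = coneLe n d := by
  ext p
  rw [SetLike.mem_coe, kvCone, Submodule.mem_span_image_finset_iff_exists_fun']
  constructor
  · rintro ⟨c, rfl⟩
    exact ⟨fun α => c α, fun α => (c α).2,
      Finset.sum_congr rfl fun α _ => smul_eq_C_mul _ _⟩
  · rintro ⟨u, hu, rfl⟩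
    exact ⟨fun α => ⟨u α, hu α⟩, by simp [smul_eq_C_mul]⟩

lemma mem_kvCone {p : MvPolynomial (Fin n) ℝ} : p ∈ kvCone n d ↔ p ∈ coneLe n d := by
  rw [← SetLike.mem_coe, coe_kvCone]

lemma kvGen_mem_kvCone {α : Fin (n + 1) → ℕ} (hα : ∑ i, α i ≤ d) :
    kvGen n α ∈ kvCone n d :=
  subset_hull ⟨α, mem_kvIdxLe.2 hα, rfl⟩

lemma one_mem_kvCone : (1 : MvPolynomial (Fin n) ℝ) ∈ kvCone n d := by
  simpa [kvGen] using kvGen_mem_kvCone (n := n) (d := d) (α := 0) (by simp)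

lemma kvCone_le_restrictTotalDegree :
    kvCone n d ≤ (restrictTotalDegree (Fin n) ℝ d : PointedCone ℝ _) := by
  refine Submodule.span_le.2 ?_
  rintro _ ⟨α, hα, rfl⟩
  exact (mem_restrictTotalDegree _ _ _).2 ((totalDegree_kvGen_le α).trans (mem_kvIdxLe.1 hα))

lemma one_sub_kvGen_mem_kvCone {α : Fin (n + 1) → ℕ} (hα : α ∈ kvIdxEq n d) :
    1 - kvGen n α ∈ kvCone n d := by
  have hm : (1 : ℝ) ≤ Nat.multinomial Finset.univ α :=
    Nat.one_le_cast.2 (Nat.multinomial_pos _ _)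
  rw [one_eq_sum_multinomial_smul_kvGen n d, ← Finset.add_sum_erase _ _ hα, add_sub_right_comm]
  nth_rewrite 2 [← one_smul ℝ (kvGen n α)]
  rw [← sub_smul]
  refine add_mem (smul_mem _ (sub_nonneg.2 hm) (kvGen_mem_kvCone (mem_kvIdxEq.1 hα).le))
    (sum_mem fun β hβ => smul_mem _ (Nat.cast_nonneg _) ?_)
  exact kvGen_mem_kvCone (mem_kvIdxEq.1 (Finset.mem_of_mem_erase hβ)).le

lemma exists_smul_one_sub_and_add_mem_kvCone {p : MvPolynomial (Fin n) ℝ}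
    (hp : p ∈ kvSpan n d) :
    ∃ M : ℝ, M • 1 - p ∈ kvCone n d ∧ M • 1 + p ∈ kvCone n d := by
  induction hp using Submodule.span_induction with
  | mem _ h =>
    obtain ⟨α, hα, rfl⟩ := h
    exact ⟨1, by simpa using one_sub_kvGen_mem_kvCone hα,
      by simpa using add_mem one_mem_kvCone (kvGen_mem_kvCone (mem_kvIdxEq.1 hα).le)⟩
  | zero => exact ⟨0, by simp, by simp⟩
  | add p q _ _ hp hq =>
    obtain ⟨M, hMsub, hMadd⟩ := hp
    obtain ⟨N, hNsub, hNadd⟩ := hq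
    refine ⟨M + N, ?_, ?_⟩
    · convert add_mem hMsub hNsub using 1
      rw [add_smul]; abel
    · convert add_mem hMadd hNadd using 1
      rw [add_smul]; abel
  | smul c p _ hp =>
    obtain ⟨M, hMsub, hMadd⟩ := hp
    rcases le_total 0 c with hc | hc
    · refine ⟨c * M, ?_, ?_⟩
      · convert smul_mem _ hc hMsub using 1
        rw [smul_sub, smul_smul]
      · convert smul_mem _ hc hMadd using 1
        rw [smul_add, smul_smul]
    · refine ⟨-c * M, ?_, ?_⟩
      · convert smul_mem _ (neg_nonneg.2 hc) hMadd using 1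
        rw [smul_add, smul_smul, neg_smul, sub_eq_add_neg]
      · convert smul_mem _ (neg_nonneg.2 hc) hMsub using 1
        rw [smul_sub, smul_smul, neg_smul, sub_neg_eq_add]

lemma exists_pos_smul_one_sub_mem_kvCone {p : MvPolynomial (Fin n) ℝ} (hp : p.totalDegree ≤ d) :
    ∃ M : ℝ, 0 < M ∧ M • 1 - p ∈ kvCone n d := by
  obtain ⟨M, hM, -⟩ := exists_smul_one_sub_and_add_mem_kvCone
    (restrictTotalDegree_le_kvSpan ((mem_restrictTotalDegree _ _ _).2 hp))
  refine ⟨|M| + 1, by positivity, ?_⟩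
  have hsplit : (|M| + 1) • (1 : MvPolynomial (Fin n) ℝ) - p =
      (|M| + 1 - M) • 1 + (M • 1 - p) := by
    rw [sub_smul]; abel
  rw [hsplit]
  exact add_mem (smul_mem _ (by linarith [le_abs_self M]) one_mem_kvCone) hM

lemma neg_one_mem_core : (-1 : MvPolynomial (Fin n) ℝ) ∈ core n d {g | -g ∈ coneLe n d} := by
  rw [← coe_kvCone]
  refine ⟨by simpa using one_mem_kvCone, fun h hh => ?_⟩
  obtain ⟨M, hM, hMh⟩ := exists_pos_smul_one_sub_mem_kvCone hh
  refine ⟨M⁻¹, inv_pos.2 hM, fun t ht htM => ?_⟩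
  have htM' : t * M ≤ 1 := by simpa [hM.ne'] using mul_le_mul_of_nonneg_right htM hM.le
  have hsplit : -(-1 + t • h) = (1 - t * M) • 1 + t • (M • 1 - h) := by
    rw [smul_sub, smul_smul, sub_smul, one_smul]; abel
  show -(-1 + t • h) ∈ kvCone n d
  rw [hsplit]
  exact add_mem (smul_mem _ (sub_nonneg.2 htM') one_mem_kvCone) (smul_mem _ ht hMh)

lemma hull_union_coneLe_le_restrictTotalDegree {G : Set (MvPolynomial (Fin n) ℝ)}
    (hG : ∀ g ∈ G, g.totalDegree ≤ d) :
    hull ℝ (G ∪ coneLe n d) ≤ (restrictTotalDegree (Fin n) ℝ d : PointedCone ℝ _) := by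
  refine Submodule.span_le.2 ?_
  rintro p (hp | hp)
  · exact (mem_restrictTotalDegree _ _ _).2 (hG p hp)
  · exact kvCone_le_restrictTotalDegree (mem_kvCone.2 hp)

lemma lt_zero_of_mem_core {L : MvPolynomial (Fin n) ℝ →ₗ[ℝ] ℝ} (hL1 : L 1 = 1)
    (hL : ∀ q ∈ coneLe n d, 0 ≤ L q) {p : MvPolynomial (Fin n) ℝ}
    (hp : p ∈ core n d {g | -g ∈ coneLe n d}) : L p < 0 := by
  obtain ⟨ε, hε, hεmem⟩ := hp.2 1 (by simp)
  have hLε := hL _ (hεmem ε hε.le le_rfl)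
  simp only [map_neg, map_add, map_smul, hL1, smul_eq_mul, mul_one] at hLε
  linarith

end Bernstein

/-- duality. `C = posi(G ∪ Σ≥_d)` is P-coherent (misses the
interior `Σ<_d` of `-Σ≥_d`) iff the dual set of normalized linear functionals,
nonnegative on `Σ≥_d` and on `G`, is nonempty. -/
theorem stmt19 (n d : ℕ) (G : Finset (MvPolynomial (Fin n) ℝ))
    (hG : ∀ g ∈ G, g.totalDegree ≤ d) :
    posi ((G : Set (MvPolynomial (Fin n) ℝ)) ∪ coneLe n d) ∩
        core n d {g : MvPolynomial (Fin n) ℝ | -g ∈ coneLe n d} = ∅ ↔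
      ∃ L : MvPolynomial (Fin n) ℝ →ₗ[ℝ] ℝ,
        L 1 = 1 ∧ (∀ p ∈ coneLe n d, 0 ≤ L p) ∧ (∀ g ∈ G, 0 ≤ L g) := by
  set S : Set (MvPolynomial (Fin n) ℝ) := (G : Set (MvPolynomial (Fin n) ℝ)) ∪ coneLe n d
  rw [posi_eq_hull]
  constructor
  · intro hC
    have hneg : -1 ∉ PointedCone.hull ℝ S := fun h =>
      Set.eq_empty_iff_forall_notMem.1 hC (-1) ⟨h, neg_one_mem_core⟩
    have hunit : ∀ v ∈ restrictTotalDegree (Fin n) ℝ d,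
        ∃ M : ℝ, M • 1 + v ∈ PointedCone.hull ℝ S := by
      intro v hv
      obtain ⟨M, -, hM⟩ := exists_pos_smul_one_sub_mem_kvCone (p := -v)
        (by rwa [totalDegree_neg, ← mem_restrictTotalDegree])
      exact ⟨M, PointedCone.subset_hull (Or.inr (by simpa using mem_kvCone.1 hM))⟩
    obtain ⟨L, hL1, hL⟩ := exists_linearMap_eq_one_nonneg_of_orderUnit _ _
      ((mem_restrictTotalDegree _ _ _).2 (by simp)) (hull_union_coneLe_le_restrictTotalDegree hG)
      hunit hneg
    exact ⟨L, hL1, fun p hp => hL p (PointedCone.subset_hull (Or.inr hp)),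
      fun g hg => hL g (PointedCone.subset_hull (Or.inl hg))⟩
  · rintro ⟨L, hL1, hLcone, hLG⟩
    refine Set.eq_empty_of_forall_notMem fun p ⟨hpC, hpcore⟩ => ?_
    exact (lt_zero_of_mem_core hL1 hLcone hpcore).not_ge
      (nonneg_of_mem_hull (fun x hx => hx.elim (hLG x) (hLcone x)) hpC)
end
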